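/- Let G=(V,E) be a finite connected simple graph, let κ*:E→ℝ be any prescribed curvature, and let ω0 be any positive initial weight. Then there exists exactly one differentiable map ω:[0,∞)→ℝ^E with ω(0)=ω0 such that ω_e(t)>0 for all t≥0 and e∈E and, for every edge e={x,y} and every t≥0, (d/dt)ω_e(t) = −(κ_{ω(t)}(x,y) − κ*_e)·ω_e(t), where κ_{ω(t)} is the Lin–Lu–Yau curvature of the graph with weight ω(t). That is, the prescribed-curvature Ricci flow has a unique positive solution on [0,∞). -/

import Mathlib

set_option linter.unusedSectionVars false
set_option maxHeartbeats 1000000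


open Finset

variable {V : Type*} [Fintype V] [DecidableEq V]

/-- The weighted vertex measure `m(x) = Σ_{y ∼ x} ω_{xy}`. -/
noncomputable def vm (G : SimpleGraph V) [DecidableRel G.Adj] (w : Sym2 V → ℝ) (x : V) : ℝ :=
  ∑ y ∈ G.neighborFinset x, w s(x, y)

/-- The weighted Laplacian `Δf(x) = (1/m(x))·Σ_{z∼x} ω_{xz}·(f(z) − f(x))`. -/
noncomputable def lap (G : SimpleGraph V) [DecidableRel G.Adj] (w : Sym2 V → ℝ)
    (f : V → ℝ) (x : V) : ℝ :=
  (1 / vm G w x) * ∑ z ∈ G.neighborFinset x, w s(x, z) * (f z - f x)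

/-- `f : V → ℝ` is 1-Lipschitz with respect to the graph distance. -/
def IsLip (G : SimpleGraph V) (f : V → ℝ) : Prop :=
  ∀ u v : V, |f u - f v| ≤ (G.dist u v : ℝ)

/-- The Lin–Lu–Yau curvature
`κ(x,y) = inf { (Δf(x) − Δf(y))/d(x,y) : f 1-Lipschitz, f(y) − f(x) = d(x,y) }`. -/
noncomputable def lly (G : SimpleGraph V) [DecidableRel G.Adj] (w : Sym2 V → ℝ) (x y : V) : ℝ :=
  sInf {r : ℝ | ∃ f : V → ℝ, IsLip G f ∧ f y - f x = (G.dist x y : ℝ) ∧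
    r = (lap G w f x - lap G w f y) / (G.dist x y : ℝ)}

section Aux

variable (G : SimpleGraph V) [DecidableRel G.Adj]

def llySet (w : Sym2 V → ℝ) (x y : V) : Set ℝ :=
  {r : ℝ | ∃ f : V → ℝ, IsLip G f ∧ f y - f x = (G.dist x y : ℝ) ∧
    r = (lap G w f x - lap G w f y) / (G.dist x y : ℝ)}

lemma lly_eq (w : Sym2 V → ℝ) (x y : V) : lly G w x y = sInf (llySet G w x y) := rfl

lemma mem_edgeFinset_of_adj {x y : V} (h : G.Adj x y) : s(x, y) ∈ G.edgeFinset :=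
  SimpleGraph.mem_edgeFinset.mpr h

lemma vm_pos {w : Sym2 V → ℝ} (hw : ∀ e ∈ G.edgeFinset, 0 < w e) {x : V}
    (hx : (G.neighborFinset x).Nonempty) : 0 < vm G w x :=
  Finset.sum_pos (fun z hz => hw _ (mem_edgeFinset_of_adj G
    ((SimpleGraph.mem_neighborFinset _ _ _).mp hz))) hx

lemma abs_isLip_le_one {f : V → ℝ} (hf : IsLip G f) {x z : V} (h : G.Adj x z) :
    |f z - f x| ≤ 1 := by
  have := hf z x
  rw [SimpleGraph.dist_eq_one_iff_adj.mpr h.symm] at this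
  exact_mod_cast this

lemma abs_sum_le_vm {w : Sym2 V → ℝ} (hw : ∀ e ∈ G.edgeFinset, 0 < w e)
    {f : V → ℝ} (hf : IsLip G f) (x : V) :
    |∑ z ∈ G.neighborFinset x, w s(x, z) * (f z - f x)| ≤ vm G w x := by
  calc |∑ z ∈ G.neighborFinset x, w s(x, z) * (f z - f x)|
      ≤ ∑ z ∈ G.neighborFinset x, |w s(x, z) * (f z - f x)| :=
        Finset.abs_sum_le_sum_abs _ _
    _ ≤ ∑ z ∈ G.neighborFinset x, w s(x, z) := by
        apply Finset.sum_le_sum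
        intro z hz
        have hadj := (SimpleGraph.mem_neighborFinset _ _ _).mp hz
        have hwpos := hw _ (mem_edgeFinset_of_adj G hadj)
        rw [abs_mul, abs_of_pos hwpos]
        nlinarith [abs_isLip_le_one G hf hadj, abs_nonneg (f z - f x)]
    _ = vm G w x := rfl

lemma abs_lap_le_one {w : Sym2 V → ℝ} (hw : ∀ e ∈ G.edgeFinset, 0 < w e)
    {f : V → ℝ} (hf : IsLip G f) {x : V} (hx : (G.neighborFinset x).Nonempty) :
    |lap G w f x| ≤ 1 := by
  have hv := vm_pos G hw hx
  have hN := abs_sum_le_vm G hw hf x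
  rw [lap, abs_mul, abs_of_pos (by positivity : (0:ℝ) < 1 / vm G w x)]
  rw [div_mul_eq_mul_div, one_mul, div_le_one hv]
  exact hN

lemma vm_congr {w w' : Sym2 V → ℝ} (h : ∀ e ∈ G.edgeFinset, w e = w' e) (x : V) :
    vm G w x = vm G w' x :=
  Finset.sum_congr rfl fun z hz => h _ (mem_edgeFinset_of_adj G
    ((SimpleGraph.mem_neighborFinset _ _ _).mp hz))

lemma lap_congr {w w' : Sym2 V → ℝ} (h : ∀ e ∈ G.edgeFinset, w e = w' e) (f : V → ℝ) (x : V) :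
    lap G w f x = lap G w' f x := by
  rw [lap, lap, vm_congr G h]
  congr 1
  exact Finset.sum_congr rfl fun z hz => by
    rw [h _ (mem_edgeFinset_of_adj G ((SimpleGraph.mem_neighborFinset _ _ _).mp hz))]

lemma lly_congr {w w' : Sym2 V → ℝ} (h : ∀ e ∈ G.edgeFinset, w e = w' e) (x y : V) :
    lly G w x y = lly G w' x y := by
  rw [lly_eq, lly_eq]
  congr 1
  ext r
  constructor <;> rintro ⟨f, h1, h2, rfl⟩ <;> exact ⟨f, h1, h2, by
    rw [lap_congr G h, lap_congr G h]⟩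

lemma lap_neg (w : Sym2 V → ℝ) (f : V → ℝ) (x : V) :
    lap G w (fun v => -f v) x = -lap G w f x := by
  rw [lap, lap, ← mul_neg, ← Finset.sum_neg_distrib]
  congr 1
  exact Finset.sum_congr rfl fun z _ => by ring

lemma llySet_subset_swap (w : Sym2 V → ℝ) (x y : V) :
    llySet G w x y ⊆ llySet G w y x := by
  rintro r ⟨f, hlip, hxy, rfl⟩
  refine ⟨fun v => -f v, fun u v => ?_, ?_, ?_⟩
  · have := hlip v u
    rw [SimpleGraph.dist_comm] at this
    calc |(-f u) - (-f v)| = |f v - f u| := by rw [neg_sub_neg]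
    _ ≤ _ := this
  · show -f x - -f y = _
    rw [SimpleGraph.dist_comm]
    linarith
  · rw [lap_neg, lap_neg, SimpleGraph.dist_comm]; ring

lemma lly_symm (w : Sym2 V → ℝ) (x y : V) : lly G w x y = lly G w y x := by
  rw [lly_eq, lly_eq]
  congr 1
  exact le_antisymm (llySet_subset_swap G w x y) (llySet_subset_swap G w y x)

lemma distFun_mem_llySet (hconn : G.Connected) (w : Sym2 V → ℝ) (x y : V) :
    (lap G w (fun v => (G.dist x v : ℝ)) x - lap G w (fun v => (G.dist x v : ℝ)) y) /
      (G.dist x y : ℝ) ∈ llySet G w x y := by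
  refine ⟨fun v => (G.dist x v : ℝ), fun u v => ?_, by
    show (G.dist x y : ℝ) - (G.dist x x : ℝ) = _
    rw [SimpleGraph.dist_self]; push_cast; ring, rfl⟩
  show |(G.dist x u : ℝ) - (G.dist x v : ℝ)| ≤ _
  rw [abs_sub_le_iff]
  constructor
  · have h1 : G.dist x u ≤ G.dist x v + G.dist v u := hconn.dist_triangle
    rw [SimpleGraph.dist_comm (u := v) (v := u)] at h1
    have := (Nat.cast_le (α := ℝ)).mpr h1
    push_cast at this ⊢
    linarith
  · have h1 : G.dist x v ≤ G.dist x u + G.dist u v := hconn.dist_triangle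
    have := (Nat.cast_le (α := ℝ)).mpr h1
    push_cast at this ⊢
    linarith

lemma llySet_nonempty (hconn : G.Connected) (w : Sym2 V → ℝ) (x y : V) :
    (llySet G w x y).Nonempty :=
  ⟨_, distFun_mem_llySet G hconn w x y⟩

lemma llySet_abs_le {w : Sym2 V → ℝ} (hw : ∀ e ∈ G.edgeFinset, 0 < w e)
    {x y : V} (hadj : G.Adj x y) : ∀ r ∈ llySet G w x y, |r| ≤ 2 := by
  rintro r ⟨f, hlip, _, rfl⟩
  have hd : (G.dist x y : ℝ) = 1 := by
    exact_mod_cast congrArg (Nat.cast (R := ℝ)) (SimpleGraph.dist_eq_one_iff_adj.mpr hadj)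
  have hx : (G.neighborFinset x).Nonempty :=
    ⟨y, (SimpleGraph.mem_neighborFinset _ _ _).mpr hadj⟩
  have hy : (G.neighborFinset y).Nonempty :=
    ⟨x, (SimpleGraph.mem_neighborFinset _ _ _).mpr hadj.symm⟩
  have h1 := abs_lap_le_one G hw hlip hx
  have h2 := abs_lap_le_one G hw hlip hy
  rw [hd, div_one]
  rw [abs_le] at h1 h2 ⊢
  constructor <;> linarith [h1.1, h1.2, h2.1, h2.2]

lemma llySet_bddBelow {w : Sym2 V → ℝ} (hw : ∀ e ∈ G.edgeFinset, 0 < w e)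
    {x y : V} (hadj : G.Adj x y) : BddBelow (llySet G w x y) :=
  ⟨-2, fun r hr => neg_le_of_abs_le (llySet_abs_le G hw hadj r hr)⟩

lemma abs_lly_le_two (hconn : G.Connected) {w : Sym2 V → ℝ}
    (hw : ∀ e ∈ G.edgeFinset, 0 < w e) {x y : V} (hadj : G.Adj x y) :
    |lly G w x y| ≤ 2 := by
  rw [abs_le]
  constructor
  · rw [lly_eq]
    exact le_csInf (llySet_nonempty G hconn w x y)
      (fun r hr => neg_le_of_abs_le (llySet_abs_le G hw hadj r hr))
  · rw [lly_eq]
    exact csInf_le_of_le (llySet_bddBelow G hw hadj)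
      (distFun_mem_llySet G hconn w x y)
      ((abs_le.mp (llySet_abs_le G hw hadj _ (distFun_mem_llySet G hconn w x y))).2)

lemma abs_sum_diff_le {w w' : Sym2 V → ℝ} {D : ℝ} (hD0 : 0 ≤ D)
    (hD : ∀ e ∈ G.edgeFinset, |w e - w' e| ≤ D) {c : V → ℝ} (hc : ∀ z, |c z| ≤ 1) (x : V) :
    |∑ z ∈ G.neighborFinset x, w s(x, z) * c z - ∑ z ∈ G.neighborFinset x, w' s(x, z) * c z|
      ≤ (Fintype.card V : ℝ) * D := by
  rw [← Finset.sum_sub_distrib]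
  calc |∑ z ∈ G.neighborFinset x, (w s(x, z) * c z - w' s(x, z) * c z)|
      ≤ ∑ z ∈ G.neighborFinset x, |w s(x, z) * c z - w' s(x, z) * c z| :=
        Finset.abs_sum_le_sum_abs _ _
    _ ≤ ∑ _z ∈ G.neighborFinset x, D := by
        apply Finset.sum_le_sum
        intro z hz
        have hadj := (SimpleGraph.mem_neighborFinset _ _ _).mp hz
        have h1 := hD _ (mem_edgeFinset_of_adj G hadj)
        have h2 := hc z
        calc |w s(x, z) * c z - w' s(x, z) * c z| = |w s(x, z) - w' s(x, z)| * |c z| := by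
              rw [← abs_mul]; ring_nf
          _ ≤ D * 1 := mul_le_mul h1 h2 (abs_nonneg _) hD0
          _ = D := mul_one D
    _ = (G.neighborFinset x).card * D := by rw [Finset.sum_const, nsmul_eq_mul]
    _ ≤ (Fintype.card V : ℝ) * D := by
        apply mul_le_mul_of_nonneg_right _ hD0
        exact_mod_cast Finset.card_le_univ _

lemma lap_diff_le {w w' : Sym2 V → ℝ} {δ M D : ℝ} (hδ : 0 < δ)
    (hw : ∀ e ∈ G.edgeFinset, w e ∈ Set.Icc δ M)
    (hw' : ∀ e ∈ G.edgeFinset, w' e ∈ Set.Icc δ M)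
    (hD0 : 0 ≤ D)
    (hD : ∀ e ∈ G.edgeFinset, |w e - w' e| ≤ D)
    {f : V → ℝ} (hf : IsLip G f) {x : V} (hx : (G.neighborFinset x).Nonempty) :
    |lap G w f x - lap G w' f x| ≤ 2 * (Fintype.card V : ℝ) * D / δ := by
  set n : ℝ := (Fintype.card V : ℝ) with hn
  have hwpos : ∀ e ∈ G.edgeFinset, 0 < w e := fun e he => lt_of_lt_of_le hδ (hw e he).1
  have hw'pos : ∀ e ∈ G.edgeFinset, 0 < w' e := fun e he => lt_of_lt_of_le hδ (hw' e he).1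
  set A := vm G w x with hA
  set A' := vm G w' x with hA'
  set N := ∑ z ∈ G.neighborFinset x, w s(x, z) * (f z - f x) with hN
  set N' := ∑ z ∈ G.neighborFinset x, w' s(x, z) * (f z - f x) with hN'
  obtain ⟨z0, hz0⟩ := hx
  have hz0adj := (SimpleGraph.mem_neighborFinset _ _ _).mp hz0
  have hAδ : δ ≤ A := by
    refine le_trans (hw _ (mem_edgeFinset_of_adj G hz0adj)).1 ?_
    exact Finset.single_le_sum (fun z hz => le_of_lt (hwpos _ (mem_edgeFinset_of_adj G
      ((SimpleGraph.mem_neighborFinset _ _ _).mp hz)))) hz0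
  have hA'δ : δ ≤ A' := by
    refine le_trans (hw' _ (mem_edgeFinset_of_adj G hz0adj)).1 ?_
    exact Finset.single_le_sum (fun z hz => le_of_lt (hw'pos _ (mem_edgeFinset_of_adj G
      ((SimpleGraph.mem_neighborFinset _ _ _).mp hz)))) hz0
  have hApos : 0 < A := lt_of_lt_of_le hδ hAδ
  have hA'pos : 0 < A' := lt_of_lt_of_le hδ hA'δ
  have hc : ∀ z, |f z - f x| ≤ 1 ∨ z ∉ G.neighborFinset x := by
    intro z
    by_cases h : z ∈ G.neighborFinset x
    · exact Or.inl (abs_isLip_le_one G hf ((SimpleGraph.mem_neighborFinset _ _ _).mp h))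
    · exact Or.inr h
  -- |N - N'| ≤ n * D
  have hNN' : |N - N'| ≤ n * D := by
    have := abs_sum_diff_le G hD0 hD (c := fun z => if z ∈ G.neighborFinset x then f z - f x else 0)
      (fun z => by by_cases h : z ∈ G.neighborFinset x
                   · simpa [h] using abs_isLip_le_one G hf ((SimpleGraph.mem_neighborFinset _ _ _).mp h)
                   · simp [h]) x
    simp only [hN, hN']
    convert this using 3 <;>
      exact Finset.sum_congr rfl fun z hz => by simp [hz]
  have hAA' : |A - A'| ≤ n * D := by
    have := abs_sum_diff_le G hD0 hD (c := fun _ => 1) (fun z => by simp) x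
    simpa [hA, hA', vm] using this
  have hN'le : |N'| ≤ A' := abs_sum_le_vm G hw'pos hf x
  have key : lap G w f x - lap G w' f x = (N - N') / A + N' * (A' - A) / (A' * A) := by
    rw [lap, lap, ← hA, ← hA', ← hN, ← hN']
    field_simp
    ring
  have hnD0 : 0 ≤ n * D := by positivity
  have h1 : |(N - N') / A| ≤ n * D / δ := by
    rw [abs_div, abs_of_pos hApos]
    exact div_le_div₀ hnD0 hNN' hδ hAδ
  have h2 : |N' * (A' - A) / (A' * A)| ≤ n * D / δ := by
    rw [abs_div, abs_mul, abs_of_pos (by positivity : (0:ℝ) < A' * A)]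
    have hup : |N'| * |A' - A| ≤ A' * (n * D) := by
      apply mul_le_mul hN'le _ (abs_nonneg _) (le_of_lt hA'pos)
      rw [abs_sub_comm]; exact hAA'
    calc |N'| * |A' - A| / (A' * A) ≤ A' * (n * D) / (A' * δ) := by
          apply div_le_div₀ (by positivity) hup (by positivity)
          exact mul_le_mul_of_nonneg_left hAδ (le_of_lt hA'pos)
      _ = n * D / δ := by
          rw [mul_div_mul_left _ _ (ne_of_gt hA'pos)]
  calc |lap G w f x - lap G w' f x| ≤ |(N - N') / A| + |N' * (A' - A) / (A' * A)| := by
        rw [key]; exact abs_add_le _ _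
    _ ≤ n * D / δ + n * D / δ := add_le_add h1 h2
    _ = 2 * n * D / δ := by ring

lemma lly_sub_lly_le (hconn : G.Connected) {w w' : Sym2 V → ℝ} {δ M D : ℝ} (hδ : 0 < δ)
    (hw : ∀ e ∈ G.edgeFinset, w e ∈ Set.Icc δ M)
    (hw' : ∀ e ∈ G.edgeFinset, w' e ∈ Set.Icc δ M)
    (hD0 : 0 ≤ D)
    (hD : ∀ e ∈ G.edgeFinset, |w e - w' e| ≤ D)
    {x y : V} (hadj : G.Adj x y) :
    lly G w x y - lly G w' x y ≤ 4 * (Fintype.card V : ℝ) * D / δ := by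
  set n : ℝ := (Fintype.card V : ℝ) with hn
  have hwpos : ∀ e ∈ G.edgeFinset, 0 < w e := fun e he => lt_of_lt_of_le hδ (hw e he).1
  have hw'pos : ∀ e ∈ G.edgeFinset, 0 < w' e := fun e he => lt_of_lt_of_le hδ (hw' e he).1
  have hd : (G.dist x y : ℝ) = 1 := by
    exact_mod_cast congrArg (Nat.cast (R := ℝ)) (SimpleGraph.dist_eq_one_iff_adj.mpr hadj)
  have hx : (G.neighborFinset x).Nonempty :=
    ⟨y, (SimpleGraph.mem_neighborFinset _ _ _).mpr hadj⟩
  have hy : (G.neighborFinset y).Nonempty :=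
    ⟨x, (SimpleGraph.mem_neighborFinset _ _ _).mpr hadj.symm⟩
  rw [sub_le_comm]
  nth_rewrite 2 [lly_eq]
  apply le_csInf (llySet_nonempty G hconn w' x y)
  rintro r' ⟨f, hlip, hf2, rfl⟩
  have hmemA : (lap G w f x - lap G w f y) / (G.dist x y : ℝ) ∈ llySet G w x y :=
    ⟨f, hlip, hf2, rfl⟩
  have h1 : lly G w x y ≤ (lap G w f x - lap G w f y) / (G.dist x y : ℝ) := by
    rw [lly_eq]; exact csInf_le (llySet_bddBelow G hwpos hadj) hmemA
  have h2 := lap_diff_le G hδ hw hw' hD0 hD hlip hx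
  have h3 := lap_diff_le G hδ hw hw' hD0 hD hlip hy
  rw [abs_le] at h2 h3
  rw [hd, div_one] at h1 ⊢
  have h4 : (4:ℝ) * n * D / δ = 2 * n * D / δ + 2 * n * D / δ := by ring
  linarith [h2.1, h2.2, h3.1, h3.2]

lemma abs_lly_diff_le (hconn : G.Connected) {w w' : Sym2 V → ℝ} {δ M D : ℝ} (hδ : 0 < δ)
    (hw : ∀ e ∈ G.edgeFinset, w e ∈ Set.Icc δ M)
    (hw' : ∀ e ∈ G.edgeFinset, w' e ∈ Set.Icc δ M)
    (hD0 : 0 ≤ D)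
    (hD : ∀ e ∈ G.edgeFinset, |w e - w' e| ≤ D)
    {x y : V} (hadj : G.Adj x y) :
    |lly G w x y - lly G w' x y| ≤ 4 * (Fintype.card V : ℝ) * D / δ := by
  rw [abs_sub_le_iff]
  exact ⟨lly_sub_lly_le G hconn hδ hw hw' hD0 hD hadj,
    lly_sub_lly_le G hconn hδ hw' hw hD0 (fun e he => by rw [abs_sub_comm]; exact hD e he) hadj⟩

noncomputable def llyS (w : Sym2 V → ℝ) : Sym2 V → ℝ :=
  Sym2.lift ⟨fun x y => lly G w x y, fun x y => lly_symm G w x y⟩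

lemma llyS_mk (w : Sym2 V → ℝ) (x y : V) : llyS G w s(x, y) = lly G w x y := rfl

end Aux

def cl (δ M : ℝ) (w : Sym2 V → ℝ) : Sym2 V → ℝ := fun e => max δ (min M (w e))

lemma cl_mem {δ M : ℝ} (hδM : δ ≤ M) (w : Sym2 V → ℝ) (e : Sym2 V) :
    cl δ M w e ∈ Set.Icc δ M :=
  ⟨le_max_left _ _, max_le hδM (min_le_left _ _)⟩

lemma cl_pos {δ M : ℝ} (hδ : 0 < δ) (w : Sym2 V → ℝ) (e : Sym2 V) : 0 < cl δ M w e :=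
  lt_of_lt_of_le hδ (le_max_left _ _)

lemma cl_eq_of_mem {δ M : ℝ} {w : Sym2 V → ℝ} {e : Sym2 V} (h : w e ∈ Set.Icc δ M) :
    cl δ M w e = w e := by
  rw [cl, min_eq_right h.2, max_eq_right h.1]

lemma abs_cl_sub_cl (δ M : ℝ) (w w' : Sym2 V → ℝ) (e : Sym2 V) :
    |cl δ M w e - cl δ M w' e| ≤ |w e - w' e| := by
  calc |cl δ M w e - cl δ M w' e|
      ≤ max |δ - δ| |min M (w e) - min M (w' e)| := abs_max_sub_max_le_max _ _ _ _
    _ = |min M (w e) - min M (w' e)| := by simp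
    _ ≤ max |M - M| |w e - w' e| := abs_min_sub_min_le_max _ _ _ _
    _ = |w e - w' e| := by simp

lemma abs_exp_sub_exp_le {a b c : ℝ} (ha : a ≤ c) (hb : b ≤ c) :
    |Real.exp a - Real.exp b| ≤ Real.exp c * |a - b| := by
  wlog h : b ≤ a generalizing a b
  · rw [abs_sub_comm, abs_sub_comm a b]; exact this hb ha (le_of_not_ge h)
  rw [abs_of_nonneg (sub_nonneg.mpr (Real.exp_le_exp.mpr h)), abs_of_nonneg (sub_nonneg.mpr h)]
  have h1 : Real.exp b = Real.exp a * Real.exp (b - a) := by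
    rw [← Real.exp_add]; ring_nf
  nlinarith [Real.add_one_le_exp (b - a), Real.exp_pos a, Real.exp_le_exp.mpr ha,
    Real.exp_pos c]

section Flow

variable (G : SimpleGraph V) [DecidableRel G.Adj] (κstar : Sym2 V → ℝ)

lemma edge_rep {e : Sym2 V} (he : e ∈ G.edgeFinset) :
    ∃ x y : V, e = s(x, y) ∧ G.Adj x y := by
  induction e using Sym2.ind with
  | _ x y => exact ⟨x, y, rfl, SimpleGraph.mem_edgeFinset.mp he⟩

lemma abs_llyS_le_two (hconn : G.Connected) {w : Sym2 V → ℝ}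
    (hw : ∀ e ∈ G.edgeFinset, 0 < w e) {e : Sym2 V} (he : e ∈ G.edgeFinset) :
    |llyS G w e| ≤ 2 := by
  obtain ⟨x, y, rfl, hadj⟩ := edge_rep G he
  rw [llyS_mk]
  exact abs_lly_le_two G hconn hw hadj

/-- The (clamped) vector field for the flow of the weights themselves. -/
noncomputable def Fv (δ M : ℝ) (w : Sym2 V → ℝ) : Sym2 V → ℝ :=
  fun e => if e ∈ G.edgeFinset then -(llyS G (cl δ M w) e - κstar e) * w e else 0

/-- The (clamped) vector field for the flow of the logarithms of the weights. -/
noncomputable def Gv (δ M : ℝ) (u : Sym2 V → ℝ) : Sym2 V → ℝ :=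
  fun e => if e ∈ G.edgeFinset then
    -(llyS G (cl δ M (fun e' => Real.exp (u e'))) e - κstar e) else 0

lemma norm_Gv_le (hconn : G.Connected) {δ M : ℝ} (hδ : 0 < δ) {B : ℝ} (hB0 : 0 ≤ B)
    (hB : ∀ e ∈ G.edgeFinset, |κstar e| ≤ B) (u : Sym2 V → ℝ) :
    ‖Gv G κstar δ M u‖ ≤ 2 + B := by
  rw [pi_norm_le_iff_of_nonneg (by linarith)]
  intro e
  rw [Real.norm_eq_abs, Gv]
  by_cases he : e ∈ G.edgeFinset
  · rw [if_pos he, abs_neg]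
    calc |llyS G (cl δ M fun e' => Real.exp (u e')) e - κstar e|
        ≤ |llyS G (cl δ M fun e' => Real.exp (u e')) e| + |κstar e| := abs_sub _ _
      _ ≤ 2 + B := add_le_add
          (abs_llyS_le_two G hconn (fun e' _ => cl_pos hδ _ e') he) (hB e he)
  · rw [if_neg he]; simp; linarith

lemma Gv_lipschitzOnWith (hconn : G.Connected) {δ M ρ : ℝ} (hδ : 0 < δ) (hδM : δ ≤ M)
    (hρ : 0 ≤ ρ) (u₀ : Sym2 V → ℝ) :
    ∃ K : NNReal, LipschitzOnWith K (Gv G κstar δ M) (Metric.closedBall u₀ ρ) := by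
  set n : ℝ := (Fintype.card V : ℝ) with hn
  set c : ℝ := Real.exp (‖u₀‖ + ρ) with hc
  refine ⟨(4 * n * c / δ).toNNReal, LipschitzOnWith.of_dist_le_mul fun u hu u' hu' => ?_⟩
  have hub : ∀ {v : Sym2 V → ℝ}, v ∈ Metric.closedBall u₀ ρ → ∀ e, |v e| ≤ ‖u₀‖ + ρ := by
    intro v hv e
    rw [Metric.mem_closedBall, dist_eq_norm] at hv
    calc |v e| = ‖v e‖ := rfl
      _ ≤ ‖v‖ := norm_le_pi_norm v e
      _ = ‖u₀ + (v - u₀)‖ := by ring_nf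
      _ ≤ ‖u₀‖ + ‖v - u₀‖ := norm_add_le _ _
      _ ≤ ‖u₀‖ + ρ := by linarith
  have hKnn : (0:ℝ) ≤ 4 * n * c / δ := by positivity
  rw [Real.coe_toNNReal _ hKnn]
  have hdistnn : 0 ≤ 4 * n * c / δ * dist u u' := by positivity
  rw [dist_pi_le_iff hdistnn]
  intro e
  rw [Real.dist_eq]
  simp only [Gv]
  by_cases he : e ∈ G.edgeFinset
  · rw [if_pos he, if_pos he]
    obtain ⟨x, y, rfl, hadj⟩ := edge_rep G he
    rw [llyS_mk, llyS_mk]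
    have hD : ∀ e' ∈ G.edgeFinset,
        |cl δ M (fun e'' => Real.exp (u e'')) e' - cl δ M (fun e'' => Real.exp (u' e'')) e'|
          ≤ c * dist u u' := by
      intro e' _
      calc |cl δ M (fun e'' => Real.exp (u e'')) e' - cl δ M (fun e'' => Real.exp (u' e'')) e'|
          ≤ |Real.exp (u e') - Real.exp (u' e')| := abs_cl_sub_cl δ M _ _ e'
        _ ≤ c * |u e' - u' e'| := by
            refine abs_exp_sub_exp_le ?_ ?_
            · exact le_trans (le_abs_self _) (hub hu e')
            · exact le_trans (le_abs_self _) (hub hu' e')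
        _ ≤ c * dist u u' := by
            apply mul_le_mul_of_nonneg_left _ (le_of_lt (Real.exp_pos _))
            rw [dist_pi_def]
            calc |u e' - u' e'| = dist (u e') (u' e') := (Real.dist_eq _ _).symm
              _ ≤ _ := by
                  exact_mod_cast dist_le_pi_dist u u' e'
    have := abs_lly_diff_le G hconn hδ (fun e' _ => cl_mem hδM _ e') (fun e' _ => cl_mem hδM _ e')
      (by positivity) hD hadj
    calc |(-(lly G (cl δ M fun e'' => Real.exp (u e'')) x y - κstar s(x, y))) -
          (-(lly G (cl δ M fun e'' => Real.exp (u' e'')) x y - κstar s(x, y)))|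
        = |lly G (cl δ M fun e'' => Real.exp (u e'')) x y -
            lly G (cl δ M fun e'' => Real.exp (u' e'')) x y| := by
          rw [show (-(lly G (cl δ M fun e'' => Real.exp (u e'')) x y - κstar s(x, y))) -
              (-(lly G (cl δ M fun e'' => Real.exp (u' e'')) x y - κstar s(x, y))) =
              -(lly G (cl δ M fun e'' => Real.exp (u e'')) x y -
                lly G (cl δ M fun e'' => Real.exp (u' e'')) x y) by ring, abs_neg]
      _ ≤ 4 * n * (c * dist u u') / δ := this
      _ = 4 * n * c / δ * dist u u' := by ring
  · rw [if_neg he, if_neg he]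
    simpa using hdistnn

lemma Fv_lipschitzOnWith (hconn : G.Connected) {δ M ρ B : ℝ} (hδ : 0 < δ) (hδM : δ ≤ M)
    (hρ : 0 ≤ ρ) (hB0 : 0 ≤ B) (hB : ∀ e ∈ G.edgeFinset, |κstar e| ≤ B) :
    ∃ K : NNReal, LipschitzOnWith K (Fv G κstar δ M) (Metric.closedBall (0 : Sym2 V → ℝ) ρ) := by
  set n : ℝ := (Fintype.card V : ℝ) with hn
  set K0 : ℝ := (2 + B) + ρ * (4 * n / δ) with hK0
  have hK0nn : 0 ≤ K0 := by positivity
  refine ⟨K0.toNNReal, LipschitzOnWith.of_dist_le_mul fun w hw w' hw' => ?_⟩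
  rw [Real.coe_toNNReal _ hK0nn]
  have hub : ∀ {v : Sym2 V → ℝ}, v ∈ Metric.closedBall (0 : Sym2 V → ℝ) ρ →
      ∀ e, |v e| ≤ ρ := by
    intro v hv e
    rw [Metric.mem_closedBall, dist_zero_right] at hv
    exact le_trans (norm_le_pi_norm v e) hv
  have hdistnn : 0 ≤ K0 * dist w w' := by positivity
  rw [dist_pi_le_iff hdistnn]
  intro e
  rw [Real.dist_eq]
  simp only [Fv]
  by_cases he : e ∈ G.edgeFinset
  · rw [if_pos he, if_pos he]
    obtain ⟨x, y, rfl, hadj⟩ := edge_rep G he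
    rw [llyS_mk, llyS_mk]
    set l := lly G (cl δ M w) x y with hl
    set l' := lly G (cl δ M w') x y with hl'
    have hcoord : |w s(x, y) - w' s(x, y)| ≤ dist w w' := by
      rw [← Real.dist_eq]
      exact_mod_cast dist_le_pi_dist w w' s(x, y)
    have habsl : |l| ≤ 2 :=
      abs_lly_le_two G hconn (fun e' _ => cl_pos hδ _ e') hadj
    have hD : ∀ e' ∈ G.edgeFinset, |cl δ M w e' - cl δ M w' e'| ≤ dist w w' := by
      intro e' _
      refine le_trans (abs_cl_sub_cl δ M _ _ e') ?_
      rw [← Real.dist_eq]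
      exact_mod_cast dist_le_pi_dist w w' e'
    have hll' : |l - l'| ≤ 4 * n * dist w w' / δ := by
      rw [hl, hl']
      exact abs_lly_diff_le G hconn hδ (fun e' _ => cl_mem hδM _ e') (fun e' _ => cl_mem hδM _ e')
        dist_nonneg hD hadj
    have key : -(l - κstar s(x, y)) * w s(x, y) - -(l' - κstar s(x, y)) * w' s(x, y)
        = -(l - κstar s(x, y)) * (w s(x, y) - w' s(x, y)) + (l' - l) * w' s(x, y) := by ring
    calc |(-(l - κstar s(x, y))) * w s(x, y) - (-(l' - κstar s(x, y))) * w' s(x, y)|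
        ≤ |(-(l - κstar s(x, y))) * (w s(x, y) - w' s(x, y))| + |(l' - l) * w' s(x, y)| := by
          rw [key]; exact abs_add_le _ _
      _ ≤ (2 + B) * dist w w' + (4 * n * dist w w' / δ) * ρ := by
          apply add_le_add
          · rw [abs_mul, abs_neg]
            apply mul_le_mul _ hcoord (abs_nonneg _) (by linarith)
            calc |l - κstar s(x, y)| ≤ |l| + |κstar s(x, y)| := abs_sub _ _
              _ ≤ 2 + B := add_le_add habsl (hB _ he)
          · rw [abs_mul]
            apply mul_le_mul _ (hub hw' _) (abs_nonneg _) (by positivity)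
            rw [abs_sub_comm]
            exact hll'
      _ = K0 * dist w w' := by rw [hK0]; ring
  · rw [if_neg he, if_neg he]
    simpa using hdistnn

/-- `f` is a solution of the (true) prescribed-curvature Ricci flow on `[0, T]`,
with initial weight `ω0`, constant equal to `ω0` on non-edges. -/
def SolOn (ω0 : Sym2 V → ℝ) (T : ℝ) (f : ℝ → Sym2 V → ℝ) : Prop :=
  (∀ e, f 0 e = ω0 e) ∧
  (∀ t ∈ Set.Icc (0:ℝ) T, ∀ e ∈ G.edgeFinset, 0 < f t e) ∧
  (∀ t : ℝ, ∀ e ∉ G.edgeFinset, f t e = ω0 e) ∧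
  ContinuousOn f (Set.Icc (0:ℝ) T) ∧
  (∀ t ∈ Set.Ico (0:ℝ) T, ∀ x y : V, G.Adj x y →
    HasDerivWithinAt (fun s => f s s(x, y))
      (-(lly G (f t) x y - κstar s(x, y)) * f t s(x, y)) (Set.Ici t) t)

lemma SolOn_anti (ω0 : Sym2 V → ℝ) {T T' : ℝ} (hT' : T' ≤ T) {f : ℝ → Sym2 V → ℝ}
    (hf : SolOn G κstar ω0 T f) : SolOn G κstar ω0 T' f := by
  obtain ⟨h1, h2, h3, h4, h5⟩ := hf
  exact ⟨h1, fun t ht => h2 t ⟨ht.1, le_trans ht.2 hT'⟩, h3,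
    h4.mono (Set.Icc_subset_Icc le_rfl hT'),
    fun t ht => h5 t ⟨ht.1, lt_of_lt_of_le ht.2 hT'⟩⟩

lemma sol_unique (hconn : G.Connected) (ω0 : Sym2 V → ℝ) {T : ℝ} (hT : 0 ≤ T)
    {f g : ℝ → Sym2 V → ℝ} (hf : SolOn G κstar ω0 T f) (hg : SolOn G κstar ω0 T g) :
    Set.EqOn f g (Set.Icc (0:ℝ) T) := by
  by_cases hE : G.edgeFinset.Nonempty
  case neg =>
    intro t _
    funext e
    have he : e ∉ G.edgeFinset := fun h => hE ⟨e, h⟩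
    rw [hf.2.2.1 t e he, hg.2.2.1 t e he]
  obtain ⟨hf0, hfpos, hfne, hfcont, hfd⟩ := hf
  obtain ⟨hg0, hgpos, hgne, hgcont, hgd⟩ := hg
  -- lower bound δ2 on all edge coordinates of both trajectories
  have hmins : ∀ e : Sym2 V, ∃ d : ℝ, 0 < d ∧
      (e ∈ G.edgeFinset → ∀ t ∈ Set.Icc (0:ℝ) T, d ≤ f t e ∧ d ≤ g t e) := by
    intro e
    by_cases he : e ∈ G.edgeFinset
    · have hcf : ContinuousOn (fun t => f t e) (Set.Icc (0:ℝ) T) :=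
        (continuous_apply e).comp_continuousOn hfcont
      have hcg : ContinuousOn (fun t => g t e) (Set.Icc (0:ℝ) T) :=
        (continuous_apply e).comp_continuousOn hgcont
      obtain ⟨t1, ht1, hmin1⟩ := isCompact_Icc.exists_isMinOn (Set.nonempty_Icc.mpr hT) hcf
      obtain ⟨t2, ht2, hmin2⟩ := isCompact_Icc.exists_isMinOn (Set.nonempty_Icc.mpr hT) hcg
      refine ⟨min (f t1 e) (g t2 e),
        lt_min (hfpos t1 ht1 e he) (hgpos t2 ht2 e he), fun _ t ht => ?_⟩
      exact ⟨le_trans (min_le_left _ _) (hmin1 ht), le_trans (min_le_right _ _) (hmin2 ht)⟩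
    · exact ⟨1, one_pos, fun h => absurd h he⟩
  choose dmin hdpos hdle using hmins
  set δ2 : ℝ := G.edgeFinset.inf' hE dmin with hδ2
  have hδ2pos : 0 < δ2 := by
    rw [hδ2, Finset.lt_inf'_iff]
    exact fun e _ => hdpos e
  have hδ2le : ∀ e ∈ G.edgeFinset, ∀ t ∈ Set.Icc (0:ℝ) T, δ2 ≤ f t e ∧ δ2 ≤ g t e := by
    intro e he t ht
    have h1 := Finset.inf'_le dmin he
    have h2 := hdle e he t ht
    exact ⟨le_trans h1 h2.1, le_trans h1 h2.2⟩
  -- upper bound ρ on the norms of both trajectories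
  obtain ⟨ρf, hρf⟩ := isCompact_Icc.exists_bound_of_continuousOn hfcont
  obtain ⟨ρg, hρg⟩ := isCompact_Icc.exists_bound_of_continuousOn hgcont
  set ρ : ℝ := max ρf ρg with hρdef
  have hρf' : ∀ t ∈ Set.Icc (0:ℝ) T, ‖f t‖ ≤ ρ :=
    fun t ht => le_trans (hρf t ht) (le_max_left _ _)
  have hρg' : ∀ t ∈ Set.Icc (0:ℝ) T, ‖g t‖ ≤ ρ :=
    fun t ht => le_trans (hρg t ht) (le_max_right _ _)
  have hcoordf : ∀ t ∈ Set.Icc (0:ℝ) T, ∀ e, f t e ≤ ρ := fun t ht e =>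
    le_trans (le_trans (le_abs_self _) (norm_le_pi_norm (f t) e)) (hρf' t ht)
  have hcoordg : ∀ t ∈ Set.Icc (0:ℝ) T, ∀ e, g t e ≤ ρ := fun t ht e =>
    le_trans (le_trans (le_abs_self _) (norm_le_pi_norm (g t) e)) (hρg' t ht)
  have hδ2ρ : δ2 ≤ ρ := by
    obtain ⟨e0, he0⟩ := hE
    have := (hδ2le e0 he0 0 (Set.left_mem_Icc.mpr hT)).1
    exact le_trans this (hcoordf 0 (Set.left_mem_Icc.mpr hT) e0)
  have hρ0 : 0 ≤ ρ := le_trans (le_of_lt hδ2pos) hδ2ρ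
  -- bound for κstar
  set B : ℝ := ∑ e ∈ G.edgeFinset, |κstar e| with hBdef
  have hB0 : 0 ≤ B := Finset.sum_nonneg fun e _ => abs_nonneg _
  have hB : ∀ e ∈ G.edgeFinset, |κstar e| ≤ B := fun e he =>
    Finset.single_le_sum (fun i _ => abs_nonneg (κstar i)) he
  obtain ⟨K, hK⟩ := Fv_lipschitzOnWith G κstar hconn hδ2pos hδ2ρ hρ0 hB0 hB
  -- both f and g solve the vector ODE with field Fv
  have hfield : ∀ (h : ℝ → Sym2 V → ℝ),
      (∀ t ∈ Set.Icc (0:ℝ) T, ∀ e ∈ G.edgeFinset, δ2 ≤ h t e) →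
      (∀ t ∈ Set.Icc (0:ℝ) T, ∀ e, h t e ≤ ρ) →
      (∀ t : ℝ, ∀ e ∉ G.edgeFinset, h t e = ω0 e) →
      (∀ t ∈ Set.Ico (0:ℝ) T, ∀ x y : V, G.Adj x y →
        HasDerivWithinAt (fun s => h s s(x, y))
          (-(lly G (h t) x y - κstar s(x, y)) * h t s(x, y)) (Set.Ici t) t) →
      ∀ t ∈ Set.Ico (0:ℝ) T,
        HasDerivWithinAt h (Fv G κstar δ2 ρ (h t)) (Set.Ici t) t := by
    intro h hlow hup hne hd t ht
    rw [hasDerivWithinAt_pi]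
    intro e
    by_cases he : e ∈ G.edgeFinset
    · obtain ⟨x, y, rfl, hadj⟩ := edge_rep G he
      have hcl : ∀ e' ∈ G.edgeFinset, cl δ2 ρ (h t) e' = h t e' := fun e' he' =>
        cl_eq_of_mem ⟨hlow t (Set.Ico_subset_Icc_self ht) e' he',
          hup t (Set.Ico_subset_Icc_self ht) e'⟩
      have : Fv G κstar δ2 ρ (h t) s(x, y)
          = -(lly G (h t) x y - κstar s(x, y)) * h t s(x, y) := by
        rw [Fv, if_pos he, llyS_mk, lly_congr G hcl]
      rw [this]
      exact hd t ht x y hadj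
    · have : (fun s => h s e) = fun _ => ω0 e := funext fun s => hne s e he
      rw [Fv, if_neg he, this]
      exact hasDerivWithinAt_const _ _ _
  have hfd' := hfield f (fun t ht e he => (hδ2le e he t ht).1) hcoordf hfne hfd
  have hgd' := hfield g (fun t ht e he => (hδ2le e he t ht).2) hcoordg hgne hgd
  have hmemf : ∀ t ∈ Set.Ico (0:ℝ) T, f t ∈ Metric.closedBall (0 : Sym2 V → ℝ) ρ :=
    fun t ht => by
      rw [Metric.mem_closedBall, dist_zero_right]
      exact hρf' t (Set.Ico_subset_Icc_self ht)
  have hmemg : ∀ t ∈ Set.Ico (0:ℝ) T, g t ∈ Metric.closedBall (0 : Sym2 V → ℝ) ρ :=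
    fun t ht => by
      rw [Metric.mem_closedBall, dist_zero_right]
      exact hρg' t (Set.Ico_subset_Icc_self ht)
  have h0 : f 0 = g 0 := funext fun e => by rw [hf0 e, hg0 e]
  exact ODE_solution_unique_of_mem_Icc_right
    (fun _ _ => hK) hfcont hfd' hmemf hgcont hgd' hmemg h0

lemma exists_sol (hconn : G.Connected) (ω0 : Sym2 V → ℝ)
    (hω0 : ∀ e ∈ G.edgeFinset, 0 < ω0 e) {T : ℝ} (hT : 0 ≤ T) :
    ∃ f : ℝ → Sym2 V → ℝ,
      (∀ e, f 0 e = ω0 e) ∧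
      (∀ t ∈ Set.Icc (0:ℝ) T, ∀ e ∈ G.edgeFinset, 0 < f t e) ∧
      (∀ t : ℝ, ∀ e ∉ G.edgeFinset, f t e = ω0 e) ∧
      (∀ t ∈ Set.Icc (0:ℝ) T, ∀ x y : V, G.Adj x y →
        HasDerivWithinAt (fun s => f s s(x, y))
          (-(lly G (f t) x y - κstar s(x, y)) * f t s(x, y)) (Set.Icc (0:ℝ) T) t) := by
  by_cases hE : G.edgeFinset.Nonempty
  case neg =>
    refine ⟨fun _ => ω0, fun e => rfl, fun t ht e he => hω0 e he, fun t e _ => rfl,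
      fun t ht x y hadj => absurd (mem_edgeFinset_of_adj G hadj) (fun h => hE ⟨_, h⟩)⟩
  -- bound for κstar
  set B : ℝ := ∑ e ∈ G.edgeFinset, |κstar e| with hBdef
  have hB0 : 0 ≤ B := Finset.sum_nonneg fun e _ => abs_nonneg _
  have hB : ∀ e ∈ G.edgeFinset, |κstar e| ≤ B := fun e he =>
    Finset.single_le_sum (fun i _ => abs_nonneg (κstar i)) he
  set C' : ℝ := 2 + B with hC'def
  have hC'pos : 0 < C' := by positivity
  set mmin : ℝ := G.edgeFinset.inf' hE ω0 with hmmindef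
  set mmax : ℝ := G.edgeFinset.sup' hE ω0 with hmmaxdef
  have hmminpos : 0 < mmin := by
    rw [hmmindef, Finset.lt_inf'_iff]
    exact hω0
  have hminmax : mmin ≤ mmax := by
    obtain ⟨e0, he0⟩ := hE
    exact le_trans (Finset.inf'_le ω0 he0) (Finset.le_sup' ω0 he0)
  set δ : ℝ := mmin * Real.exp (-(C' * T)) with hδdef
  set M : ℝ := mmax * Real.exp (C' * T) with hMdef
  have hδpos : 0 < δ := by positivity
  have hδM : δ ≤ M := by
    apply mul_le_mul hminmax (Real.exp_le_exp.mpr (by nlinarith)) (le_of_lt (Real.exp_pos _))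
    linarith
  set u0 : Sym2 V → ℝ := fun e => if e ∈ G.edgeFinset then Real.log (ω0 e) else 0 with hu0def
  set R : ℝ := C' * T with hRdef
  have hR0 : 0 ≤ R := by positivity
  obtain ⟨K, hK⟩ := Gv_lipschitzOnWith G κstar hconn hδpos hδM hR0 u0
  have hpl : IsPicardLindelof (fun _ u => Gv G κstar δ M u) (tmin := 0) (tmax := T)
      ⟨0, Set.left_mem_Icc.mpr hT⟩ u0 R.toNNReal 0 C'.toNNReal K :=
    { lipschitzOnWith := fun t _ => by rw [Real.coe_toNNReal _ hR0]; exact hK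
      continuousOn := fun x _ => continuousOn_const
      norm_le := fun t _ x _ => by
        rw [Real.coe_toNNReal _ hC'pos.le]; exact norm_Gv_le G κstar hconn hδpos hB0 hB x
      mul_max_le := by
        rw [Real.coe_toNNReal _ hC'pos.le, Real.coe_toNNReal _ hR0]
        simp [max_eq_left hT, hRdef] }
  obtain ⟨u, hu0, hu⟩ := hpl.exists_eq_forall_mem_Icc_hasDerivWithinAt₀
  replace hu0 : u 0 = u0 := hu0
  have hucont : ContinuousOn u (Set.Icc (0:ℝ) T) :=
    fun t ht => (hu t ht).continuousWithinAt
  -- Gronwall a priori bound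
  have hgron : ∀ t ∈ Set.Icc (0:ℝ) T, ‖u t - u0‖ ≤ C' * t := by
    intro t ht
    have := norm_le_gronwallBound_of_norm_deriv_right_le
      (f := fun s => u s - u0) (f' := fun s => Gv G κstar δ M (u s))
      (δ := 0) (K := 0) (ε := C') (a := 0) (b := T)
      (hucont.sub continuousOn_const)
      (fun s hs => ((hu s (Set.Ico_subset_Icc_self hs)).sub_const u0).mono_of_mem_nhdsWithin
        (Icc_mem_nhdsGE_of_mem hs))
      (by simp [hu0])
      (fun s _ => by
        rw [zero_mul, zero_add]
        exact norm_Gv_le G κstar hconn hδpos hB0 hB (u s))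
      t ht
    rw [gronwallBound_K0] at this
    simpa using this
  -- coordinate a priori bounds
  have hcb : ∀ t ∈ Set.Icc (0:ℝ) T, ∀ e ∈ G.edgeFinset,
      Real.exp (u t e) ∈ Set.Icc δ M := by
    intro t ht e he
    have h1 : |u t e - u0 e| ≤ C' * T := by
      calc |u t e - u0 e| = ‖(u t - u0) e‖ := by rw [Pi.sub_apply]; rfl
        _ ≤ ‖u t - u0‖ := norm_le_pi_norm _ e
        _ ≤ C' * t := hgron t ht
        _ ≤ C' * T := by nlinarith [ht.2]
    have hu0e : u0 e = Real.log (ω0 e) := if_pos he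
    rw [abs_le] at h1
    constructor
    · rw [hδdef]
      calc mmin * Real.exp (-(C' * T))
          ≤ ω0 e * Real.exp (-(C' * T)) := by
            apply mul_le_mul_of_nonneg_right (Finset.inf'_le ω0 he)
              (le_of_lt (Real.exp_pos _))
        _ = Real.exp (Real.log (ω0 e) + -(C' * T)) := by
            rw [Real.exp_add, Real.exp_log (hω0 e he)]
        _ ≤ Real.exp (u t e) := Real.exp_le_exp.mpr (by rw [← hu0e]; linarith [h1.1])
    · rw [hMdef]
      calc Real.exp (u t e) ≤ Real.exp (Real.log (ω0 e) + C' * T) :=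
            Real.exp_le_exp.mpr (by rw [← hu0e]; linarith [h1.2])
        _ = ω0 e * Real.exp (C' * T) := by rw [Real.exp_add, Real.exp_log (hω0 e he)]
        _ ≤ mmax * Real.exp (C' * T) := by
            apply mul_le_mul_of_nonneg_right (Finset.le_sup' ω0 he)
              (le_of_lt (Real.exp_pos _))
  refine ⟨fun t e => if e ∈ G.edgeFinset then Real.exp (u t e) else ω0 e, ?_, ?_, ?_, ?_⟩
  · intro e
    by_cases he : e ∈ G.edgeFinset
    · simp only [he, if_true, hu0]
      rw [hu0def]
      simp only [he, if_true]
      exact Real.exp_log (hω0 e he)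
    · simp [he]
  · intro t _ e he
    simp only [he, if_true]
    exact Real.exp_pos _
  · intro t e he
    simp [he]
  · intro t ht x y hadj
    have he : s(x, y) ∈ G.edgeFinset := mem_edgeFinset_of_adj G hadj
    have hue : HasDerivWithinAt (fun s => u s s(x, y)) (Gv G κstar δ M (u t) s(x, y))
        (Set.Icc (0:ℝ) T) t := hasDerivWithinAt_pi.mp (hu t ht) s(x, y)
    have hexp := hue.exp
    have hfun : (fun s => (fun e => if e ∈ G.edgeFinset then Real.exp (u s e) else ω0 e) s(x, y))
        = fun s => Real.exp (u s s(x, y)) := funext fun s => if_pos he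
    rw [hfun]
    have hcl : ∀ e' ∈ G.edgeFinset,
        cl δ M (fun e'' => Real.exp (u t e'')) e'
          = (fun e => if e ∈ G.edgeFinset then Real.exp (u t e) else ω0 e) e' := by
      intro e' he'
      rw [cl_eq_of_mem (hcb t ht e' he')]
      simp [he']
    have hvel : -(lly G (fun e => if e ∈ G.edgeFinset then Real.exp (u t e) else ω0 e) x y
          - κstar s(x, y)) * (if s(x, y) ∈ G.edgeFinset then Real.exp (u t s(x, y)) else ω0 s(x, y))
        = Real.exp (u t s(x, y)) * Gv G κstar δ M (u t) s(x, y) := by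
      rw [if_pos he, Gv, if_pos he, llyS_mk, lly_congr G hcl]
      ring
    rw [hvel]
    exact hexp

lemma solOn_of_strong (hconn : G.Connected) (ω0 : Sym2 V → ℝ) {T : ℝ}
    {f : ℝ → Sym2 V → ℝ}
    (h1 : ∀ e, f 0 e = ω0 e)
    (h2 : ∀ t ∈ Set.Icc (0:ℝ) T, ∀ e ∈ G.edgeFinset, 0 < f t e)
    (h3 : ∀ t : ℝ, ∀ e ∉ G.edgeFinset, f t e = ω0 e)
    (h4 : ∀ t ∈ Set.Icc (0:ℝ) T, ∀ x y : V, G.Adj x y →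
      HasDerivWithinAt (fun s => f s s(x, y))
        (-(lly G (f t) x y - κstar s(x, y)) * f t s(x, y)) (Set.Icc (0:ℝ) T) t) :
    SolOn G κstar ω0 T f := by
  refine ⟨h1, h2, h3, ?_, ?_⟩
  · apply continuousOn_pi.mpr
    intro e
    by_cases he : e ∈ G.edgeFinset
    · obtain ⟨x, y, rfl, hadj⟩ := edge_rep G he
      exact fun t ht => (h4 t ht x y hadj).continuousWithinAt
    · have : (fun t => f t e) = fun _ => ω0 e := funext fun t => h3 t e he
      rw [this]
      exact continuousOn_const
  · intro t ht x y hadj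
    exact (h4 t (Set.Ico_subset_Icc_self ht) x y hadj).mono_of_mem_nhdsWithin
      (Icc_mem_nhdsGE_of_mem ht)

end Flow

/-- Existence and uniqueness of the prescribed-curvature Ricci flow
`(d/dt)ω_e = −(κ_{ω(t)}(e) − κ*_e)·ω_e` on `[0,∞)` for any prescribed curvature `κ*` and any
positive initial weight `ω0`. -/
theorem ricci_flow_exists_unique (G : SimpleGraph V) [DecidableRel G.Adj]
    (hconn : G.Connected) (κstar : Sym2 V → ℝ)
    (ω0 : Sym2 V → ℝ) (hω0 : ∀ e ∈ G.edgeFinset, 0 < ω0 e) :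
    ∃ ω : ℝ → Sym2 V → ℝ,
      ((∀ e ∈ G.edgeFinset, ω 0 e = ω0 e) ∧
        (∀ t ≥ (0 : ℝ), ∀ e ∈ G.edgeFinset, 0 < ω t e) ∧
        (∀ t ≥ (0 : ℝ), ∀ x y : V, G.Adj x y →
          HasDerivWithinAt (fun s => ω s s(x, y))
            (-(lly G (ω t) x y - κstar s(x, y)) * ω t s(x, y)) (Set.Ici 0) t)) ∧
      ∀ ω' : ℝ → Sym2 V → ℝ,
        ((∀ e ∈ G.edgeFinset, ω' 0 e = ω0 e) ∧
          (∀ t ≥ (0 : ℝ), ∀ e ∈ G.edgeFinset, 0 < ω' t e) ∧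
          (∀ t ≥ (0 : ℝ), ∀ x y : V, G.Adj x y →
            HasDerivWithinAt (fun s => ω' s s(x, y))
              (-(lly G (ω' t) x y - κstar s(x, y)) * ω' t s(x, y)) (Set.Ici 0) t)) →
        ∀ t ≥ (0 : ℝ), ∀ e ∈ G.edgeFinset, ω' t e = ω t e := by
  have hex : ∀ n : ℕ, ∃ f : ℝ → Sym2 V → ℝ,
      (∀ e, f 0 e = ω0 e) ∧
      (∀ t ∈ Set.Icc (0:ℝ) (n:ℝ), ∀ e ∈ G.edgeFinset, 0 < f t e) ∧
      (∀ t : ℝ, ∀ e ∉ G.edgeFinset, f t e = ω0 e) ∧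
      (∀ t ∈ Set.Icc (0:ℝ) (n:ℝ), ∀ x y : V, G.Adj x y →
        HasDerivWithinAt (fun s => f s s(x, y))
          (-(lly G (f t) x y - κstar s(x, y)) * f t s(x, y)) (Set.Icc (0:ℝ) (n:ℝ)) t) :=
    fun n => exists_sol G κstar hconn ω0 hω0 (Nat.cast_nonneg n)
  choose sol hs1 hs2 hs3 hs4 using hex
  have hSol : ∀ n : ℕ, SolOn G κstar ω0 (n:ℝ) (sol n) := fun n =>
    solOn_of_strong G κstar hconn ω0 (hs1 n) (hs2 n) (hs3 n) (hs4 n)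
  have hagree : ∀ (m k : ℕ) (t : ℝ), 0 ≤ t → t ≤ (m:ℝ) → t ≤ (k:ℝ) → sol m t = sol k t := by
    intro m k t ht0 htm htk
    have hmin0 : (0:ℝ) ≤ min (m:ℝ) (k:ℝ) := le_min (Nat.cast_nonneg _) (Nat.cast_nonneg _)
    exact sol_unique G κstar hconn ω0 hmin0
      (SolOn_anti G κstar ω0 (min_le_left _ _) (hSol m))
      (SolOn_anti G κstar ω0 (min_le_right _ _) (hSol k))
      ⟨ht0, le_min htm htk⟩
  set ω : ℝ → Sym2 V → ℝ := fun t => sol (⌈t⌉₊ + 1) t with hωdef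
  have hceil : ∀ t : ℝ, 0 ≤ t → t ≤ ((⌈t⌉₊ + 1 : ℕ) : ℝ) := by
    intro t ht
    push_cast
    linarith [Nat.le_ceil t]
  have hω_eq : ∀ (N : ℕ) (s : ℝ), 0 ≤ s → s ≤ (N:ℝ) → ω s = sol N s := fun N s hs0 hsN =>
    hagree (⌈s⌉₊ + 1) N s hs0 (hceil s hs0) hsN
  have hωSolOn : ∀ T : ℝ, 0 ≤ T → SolOn G κstar ω0 T ω := by
    intro T hT
    set N : ℕ := ⌈T⌉₊ + 1 with hNdef
    have hTN : T ≤ (N:ℝ) := hceil T hT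
    have hsolN : SolOn G κstar ω0 T (sol N) := SolOn_anti G κstar ω0 hTN (hSol N)
    obtain ⟨hc1, hc2, hc3, hc4, hc5⟩ := hsolN
    refine ⟨?_, ?_, ?_, ?_, ?_⟩
    · intro e
      rw [hω_eq N 0 le_rfl (Nat.cast_nonneg _)]
      exact hc1 e
    · intro t ht e he
      rw [hω_eq N t ht.1 (le_trans ht.2 hTN)]
      exact hc2 t ht e he
    · intro t e he
      exact hs3 _ t e he
    · exact hc4.congr fun s hs => hω_eq N s hs.1 (le_trans hs.2 hTN)
    · intro t ht x y hadj
      have heqt : ω t = sol N t := hω_eq N t ht.1 (le_trans (le_of_lt ht.2) hTN)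
      have hmem : Set.Icc (0:ℝ) T ∈ nhdsWithin t (Set.Ici t) := Icc_mem_nhdsGE_of_mem ht
      have H := (hc5 t ht x y hadj).congr_of_eventuallyEq
        (Filter.eventuallyEq_of_mem hmem
          (fun s hs => congrFun (hω_eq N s hs.1 (le_trans hs.2 hTN)) s(x, y)))
        (congrFun heqt s(x, y))
      rw [← heqt] at H
      exact H
  refine ⟨ω, ⟨?_, ?_, ?_⟩, ?_⟩
  · intro e _
    rw [hω_eq 1 0 le_rfl (by norm_num)]
    exact hs1 1 e
  · intro t ht e he
    exact hs2 (⌈t⌉₊ + 1) t ⟨ht, hceil t ht⟩ e he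
  · intro t ht x y hadj
    set N : ℕ := ⌈t⌉₊ + 2 with hNdef
    have htN : t < (N:ℝ) := by
      rw [hNdef]
      push_cast
      linarith [Nat.le_ceil t]
    have heqt : ω t = sol N t := hω_eq N t ht (le_of_lt htN)
    have hmem : Set.Icc (0:ℝ) (N:ℝ) ∈ nhdsWithin t (Set.Ici 0) :=
      mem_nhdsWithin.mpr ⟨Set.Iio (N:ℝ), isOpen_Iio, htN, fun s hs => ⟨hs.2, le_of_lt hs.1⟩⟩
    have H := hs4 N t ⟨ht, le_of_lt htN⟩ x y hadj
    have H2 := H.mono_of_mem_nhdsWithin hmem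
    have H3 := H2.congr_of_eventuallyEq
      (Filter.eventuallyEq_of_mem hmem
        (fun s hs => congrFun (hω_eq N s hs.1 hs.2) s(x, y)))
      (congrFun heqt s(x, y))
    rw [← heqt] at H3
    exact H3
  · rintro ω' ⟨h0', hpos', hd'⟩ t ht e he
    set g : ℝ → Sym2 V → ℝ := fun s e => if e ∈ G.edgeFinset then ω' s e else ω0 e with hgdef
    have hgSol : SolOn G κstar ω0 t g := by
      refine ⟨?_, ?_, ?_, ?_, ?_⟩
      · intro e'
        by_cases he' : e' ∈ G.edgeFinset
        · simp only [hgdef, he', if_true]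
          exact h0' e' he'
        · show (if e' ∈ G.edgeFinset then ω' 0 e' else ω0 e') = ω0 e'
          rw [if_neg he']
      · intro s hs e' he'
        show 0 < (if e' ∈ G.edgeFinset then ω' s e' else ω0 e')
        rw [if_pos he']
        exact hpos' s hs.1 e' he'
      · intro s e' he'
        show (if e' ∈ G.edgeFinset then ω' s e' else ω0 e') = ω0 e'
        rw [if_neg he']
      · apply continuousOn_pi.mpr
        intro e'
        by_cases he' : e' ∈ G.edgeFinset
        · obtain ⟨x, y, rfl, hadj⟩ := edge_rep G he'
          have : (fun s => g s s(x, y)) = fun s => ω' s s(x, y) :=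
            funext fun s => if_pos he'
          rw [this]
          intro s hs
          exact ((hd' s hs.1 x y hadj).continuousWithinAt).mono fun r hr => hr.1
        · have : (fun s => g s e') = fun _ => ω0 e' := funext fun s => if_neg he'
          rw [this]
          exact continuousOn_const
      · intro s hs x y hadj
        have he'' : s(x, y) ∈ G.edgeFinset := mem_edgeFinset_of_adj G hadj
        have hfun : (fun σ => g σ s(x, y)) = fun σ => ω' σ s(x, y) :=
          funext fun σ => if_pos he''
        have hcongr : ∀ e' ∈ G.edgeFinset, g s e' = ω' s e' := fun e' he' => if_pos he'
        have hval : g s s(x, y) = ω' s s(x, y) := if_pos he''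
        rw [hfun, lly_congr G hcongr, hval]
        exact (hd' s hs.1 x y hadj).mono fun r hr => le_trans hs.1 hr
    have huniq := sol_unique G κstar hconn ω0 ht hgSol (hωSolOn t ht)
    have hgt : g t = ω t := huniq (Set.right_mem_Icc.mpr ht)
    calc ω' t e = g t e := (if_pos he).symm
      _ = ω t e := congrFun hgt e
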